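/- arXiv:1506.02017 — 2 statements merged into one kernel-verified Lean document; each statement's English description precedes it below -/
import Mathlib

section
/- Let A be a unital C*-algebra with a tracial state φ, a ∈ A, and ε > 0. Then |ε · φ(a (a* a + ε²)⁻¹)| ≤ 1/√2 < 1. -/
open ComplexOrder

/-! With `b = (a⋆a + ε²)⁻¹` one has `(ab)⋆(ab) = b (a⋆a) b ≤ 1 / (4ε²)`, because
`(a⋆a + ε²)² - 4ε² a⋆a = (a⋆a - ε²)² ≥ 0` and conjugating by the self-adjoint `b` preserves order.
Cauchy–Schwarz for the positive functional `φ` then gives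
`|φ(ab)|² ≤ φ(1) φ((ab)⋆(ab)) ≤ 1 / (4ε²)`, i.e. `ε |φ(ab)| ≤ 1/2 ≤ 1/√2`. -/

namespace PositiveLinearMap

variable {A : Type*} [NonUnitalCStarAlgebra A] [PartialOrder A] [StarOrderedRing A]

/-- Cauchy–Schwarz for the GNS pre-inner product `⟪x, y⟫ = f (star x * y)`. -/
lemma norm_apply_star_mul_sq_le (f : A →ₚ[ℂ] ℂ) (x y : A) :
    ‖f (star x * y)‖ ^ 2 ≤ (f (star x * x)).re * (f (star y * y)).re := by
  have hsq (z : A) : ‖f.toPreGNS z‖ ^ 2 = (f (star z * z)).re := by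
    rw [preGNS_norm_def, ofPreGNS_toPreGNS,
      Real.sq_sqrt (Complex.nonneg_iff.mp (f.map_nonneg (star_mul_self_nonneg z))).1]
  have h := norm_inner_le_norm (𝕜 := ℂ) (f.toPreGNS x) (f.toPreGNS y)
  rw [preGNS_inner_def, ofPreGNS_toPreGNS, ofPreGNS_toPreGNS] at h
  calc ‖f (star x * y)‖ ^ 2 ≤ (‖f.toPreGNS x‖ * ‖f.toPreGNS y‖) ^ 2 := by gcongr
    _ = (f (star x * x)).re * (f (star y * y)).re := by rw [mul_pow, hsq, hsq]

end PositiveLinearMap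

lemma Commute.four_mul_le_add_sq {R : Type*} [Ring R] [PartialOrder R] [StarRing R]
    [StarOrderedRing R] {s t : R} (hst : Commute s t) (hs : IsSelfAdjoint s)
    (ht : IsSelfAdjoint t) : 4 * (s * t) ≤ (s + t) ^ 2 := by
  have hsq : (s + t) ^ 2 = 4 * (s * t) + star (s - t) * (s - t) + 2 * (t * s - s * t) := by
    rw [star_sub, hs.star_eq, ht.star_eq]
    noncomm_ring
  rw [hsq, hst.eq, sub_self, mul_zero, add_zero]
  exact le_add_of_nonneg_right (star_mul_self_nonneg _)

lemma four_smul_inverse_mul_mul_inverse_le_one {A : Type*} [CStarAlgebra A] [PartialOrder A]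
    [StarOrderedRing A] {t : A} (ht : 0 ≤ t) {r : ℝ} (hr : 0 < r) :
    (4 * r) • (Ring.inverse (t + algebraMap ℝ A r) * t * Ring.inverse (t + algebraMap ℝ A r))
      ≤ 1 := by
  set c := t + algebraMap ℝ A r
  have hc : IsStrictlyPositive c := .nonneg_add ht (isStrictlyPositive_algebraMap hr)
  set b := Ring.inverse c
  have hsq_le := (Algebra.commute_algebraMap_right r t).four_mul_le_add_sq
    (IsSelfAdjoint.of_nonneg ht) (.algebraMap A (.all r))
  have hconj := hc.isSelfAdjoint.ringInverse.conjugate_le_conjugate hsq_le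
  have hlhs : b * (4 * (t * algebraMap ℝ A r)) * b = (4 * r) • (b * t * b) := by
    rw [← Algebra.commutes, ← Algebra.smul_def, ← map_ofNat (algebraMap ℝ A) 4,
      ← Algebra.smul_def, smul_smul, mul_smul_comm, smul_mul_assoc, mul_assoc]
  have hrhs : b * (c ^ 2) * b = 1 := by
    have hbc : b * c = 1 := Ring.inverse_mul_cancel c hc.isUnit
    have hcb : c * b = 1 := Ring.mul_inverse_cancel c hc.isUnit
    rw [sq, mul_assoc, mul_assoc, hcb, mul_one, hbc]
  rwa [hlhs, hrhs] at hconj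

theorem eps_trace_bound_general {A : Type*} [CStarAlgebra A] [PartialOrder A]
    [StarOrderedRing A] (φ : A →ₗ[ℂ] ℂ)
    (hpos : ∀ a : A, 0 ≤ a → 0 ≤ φ a)
    (hone : φ 1 = 1)
    (a : A) (ε : ℝ) (hε : 0 < ε) :
    ‖(ε : ℂ) * φ (a * Ring.inverse (star a * a + algebraMap ℂ A (ε ^ 2 : ℝ)))‖
        ≤ 1 / Real.sqrt 2 ∧ 1 / Real.sqrt 2 < 1 := by
  let f : A →ₚ[ℂ] ℂ := .mk₀ φ hpos
  have hf (x : A) : f x = φ x := rfl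
  have hε2 : algebraMap ℂ A (ε ^ 2 : ℝ) = algebraMap ℝ A (ε ^ 2) :=
    (IsScalarTower.algebraMap_apply ℝ ℂ A _).symm
  rw [hε2]
  set b := Ring.inverse (star a * a + algebraMap ℝ A (ε ^ 2))
  have hstar_ab : star (a * b) * (a * b) = b * (star a * a) * b := by
    have hbsa : IsSelfAdjoint b :=
      ((IsSelfAdjoint.star_mul_self a).add (.algebraMap A (.all _))).ringInverse
    rw [star_mul, hbsa.star_eq]
    simp only [mul_assoc]
  have hle := four_smul_inverse_mul_mul_inverse_le_one (star_mul_self_nonneg a) (pow_pos hε 2)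
  rw [← hstar_ab] at hle
  have hφ_le : 4 * ε ^ 2 * (φ (star (a * b) * (a * b))).re ≤ 1 := by
    have := Complex.le_def.mp (OrderHomClass.mono f hle) |>.1
    rwa [PositiveLinearMap.map_smul_of_tower, hf, hf, hone, Complex.smul_re, smul_eq_mul,
      Complex.one_re] at this
  have hCS := f.norm_apply_star_mul_sq_le 1 (a * b)
  rw [star_one, one_mul, one_mul, hf, hf, hf, hone, Complex.one_re, one_mul] at hCS
  have hhalf : ε * ‖φ (a * b)‖ ≤ 1 / 2 := by nlinarith [norm_nonneg (φ (a * b))]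
  have hhalf_le : 1 / 2 ≤ 1 / √2 := by
    gcongr
    exact Real.sqrt_le_iff.mpr ⟨by norm_num, by norm_num⟩
  refine ⟨?_, (div_lt_one (by positivity)).mpr Real.one_lt_sqrt_two⟩
  rw [norm_mul, Complex.norm_real, Real.norm_of_nonneg hε.le]
  linarith

theorem eps_trace_bound {A : Type*} [CStarAlgebra A] [PartialOrder A]
    [StarOrderedRing A] (φ : A →ₗ[ℂ] ℂ)
    (hpos : ∀ a : A, 0 ≤ a → 0 ≤ φ a)
    (hone : φ 1 = 1)
    (htr : ∀ a b : A, φ (a * b) = φ (b * a))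
    (a : A) (ε : ℝ) (hε : 0 < ε) :
    ‖(ε : ℂ) * φ (a * Ring.inverse (star a * a + algebraMap ℂ A (ε ^ 2 : ℝ)))‖
        ≤ 1 / Real.sqrt 2 ∧ 1 / Real.sqrt 2 < 1 :=
  eps_trace_bound_general φ hpos hone a ε hε
end

section
/- Let R be a ring, and let a, d be central elements and b, c arbitrary elements of R such that bc − ad and cb − ad are invertible. Then the 2×2 matrix [[a, b], [c, d]] over R is invertible with inverse [[−d(bc − ad)⁻¹, b(cb − ad)⁻¹], [c(bc − ad)⁻¹, −a(cb − ad)⁻¹]]. -/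
/-!
With `M = !![a, b; c, d]` and `A = !![-d, b; c, -a]`: since `a` and `d` are central, `M * A` and `A * M` are both the
diagonal matrix `D = diag(bc - ad, cb - ad)`. Centrality also gives `b (cb - ad) = (bc - ad) b` and
`c (bc - ad) = (cb - ad) c`, so the claimed inverse is both `A * D⁻¹` and `D⁻¹ * A`.
-/

open Matrix

section

variable {R : Type*} [Ring R]

theorem SemiconjBy.mul_sub_mul {a d x : R} (y : R) (ha : Commute a x) (hd : Commute d x) :
    SemiconjBy x (y * x - a * d) (x * y - a * d) :=
  SemiconjBy.sub_right (mul_assoc x y x).symm (ha.mul_left hd).symm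

theorem fin_two_mul_neg_adjugate {a b c d : R} (hab : Commute a b) (hdc : Commute d c)
    (had : Commute a d) :
    !![a, b; c, d] * !![-d, b; c, -a] = !![b * c - a * d, 0; 0, c * b - a * d] := by
  simp only [mul_fin_two, mul_neg, hab.eq, hdc.eq, ← had.eq, add_neg_cancel, neg_add_cancel,
    neg_add_eq_sub, ← sub_eq_add_neg]

theorem neg_adjugate_mul_fin_two {a b c d : R} (hac : Commute a c) (hdb : Commute d b)
    (had : Commute a d) :
    !![-d, b; c, -a] * !![a, b; c, d] = !![b * c - a * d, 0; 0, c * b - a * d] := by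
  simp only [mul_fin_two, neg_mul, hac.eq, hdb.eq, had.eq, add_neg_cancel, neg_add_cancel,
    neg_add_eq_sub, ← sub_eq_add_neg]

theorem fin_two_diag_units_mul_inv (p q : Rˣ) :
    !![(p : R), 0; 0, (q : R)] * !![(↑p⁻¹ : R), 0; 0, ↑q⁻¹] = 1 := by
  simp [one_fin_two]

theorem fin_two_diag_units_inv_mul (p q : Rˣ) :
    !![(↑p⁻¹ : R), 0; 0, ↑q⁻¹] * !![(p : R), 0; 0, (q : R)] = 1 := by
  simp [one_fin_two]

end

theorem two_by_two_inverse {R : Type*} [Ring R] (a b c d : R)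
    (ha : ∀ r : R, a * r = r * a) (hd : ∀ r : R, d * r = r * d)
    (h₁ : IsUnit (b * c - a * d)) (h₂ : IsUnit (c * b - a * d)) :
    (!![a, b; c, d] : Matrix (Fin 2) (Fin 2) R) *
        !![-d * Ring.inverse (b * c - a * d), b * Ring.inverse (c * b - a * d);
           c * Ring.inverse (b * c - a * d), -a * Ring.inverse (c * b - a * d)] = 1 ∧
    (!![-d * Ring.inverse (b * c - a * d), b * Ring.inverse (c * b - a * d);
        c * Ring.inverse (b * c - a * d), -a * Ring.inverse (c * b - a * d)] : Matrix (Fin 2) (Fin 2) R) *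
        !![a, b; c, d] = 1 := by
  have ha : ∀ r, Commute a r := ha
  have hd : ∀ r, Commute d r := hd
  obtain ⟨p, hp⟩ := h₁
  obtain ⟨q, hq⟩ := h₂
  have hbq : SemiconjBy b ↑q⁻¹ ↑p⁻¹ :=
    SemiconjBy.units_inv_right (by rw [hp, hq]; exact .mul_sub_mul c (ha b) (hd b))
  have hcp : SemiconjBy c ↑p⁻¹ ↑q⁻¹ :=
    SemiconjBy.units_inv_right (by rw [hp, hq]; exact .mul_sub_mul b (ha c) (hd c))
  have h_right : !![-d * ↑p⁻¹, b * ↑q⁻¹; c * ↑p⁻¹, -a * ↑q⁻¹] =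
      !![-d, b; c, -a] * !![(↑p⁻¹ : R), 0; 0, ↑q⁻¹] := by
    simp
  have h_left : !![-d * ↑p⁻¹, b * ↑q⁻¹; c * ↑p⁻¹, -a * ↑q⁻¹] =
      !![(↑p⁻¹ : R), 0; 0, ↑q⁻¹] * !![-d, b; c, -a] := by
    simp [hbq.eq, hcp.eq, (hd _).units_inv_right.eq, (ha _).units_inv_right.eq]
  rw [← hp, ← hq, Ring.inverse_unit, Ring.inverse_unit]
  constructor
  · rw [h_right, ← Matrix.mul_assoc, fin_two_mul_neg_adjugate (ha b) (hd c) (ha d), ← hp, ← hq,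
      fin_two_diag_units_mul_inv]
  · rw [h_left, Matrix.mul_assoc, neg_adjugate_mul_fin_two (ha c) (hd b) (ha d), ← hp, ← hq,
      fin_two_diag_units_inv_mul]
end
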